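/- Ground semantics is preserved by R∖@ even under instantiation of matchable variables: if p rewrites in one step to p' with respect to R∖@, and σ is a substitution whose domain is disjoint from the free variables of p, then ⟦σ(p)⟧ = ⟦σ(p')⟧. -/

import Mathlib

/-- A constructor signature: a type of constructor symbols with arities. -/
structure Sig where
  C : Type
  ar : C → ℕ

/-- Values: ground constructor terms over the signature `S`. -/
inductive Val (S : Sig) : Type where
  | mk : (c : S.C) → (Fin (S.ar c) → Val S) → Val S

/-- Extended as-patterns: variables, constructor applications, sums,
complements, `⊥` and aliases `q @ p`. -/
inductive Pat (S : Sig) : Type where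
  | var : ℕ → Pat S
  | cons : (c : S.C) → (Fin (S.ar c) → Pat S) → Pat S
  | plus : Pat S → Pat S → Pat S
  | minus : Pat S → Pat S → Pat S
  | bot : Pat S
  | atp : Pat S → Pat S → Pat S

namespace Pat

variable {S : Sig}

/-- Variables occurring in a pattern. -/
def vars : Pat S → Set ℕ
  | var x => {x}
  | cons _ ps => ⋃ i, vars (ps i)
  | plus p q => vars p ∪ vars q
  | minus p q => vars p ∪ vars q
  | bot => ∅
  | atp q p => vars q ∪ vars p

/-- Linearity of extended as-patterns. -/
inductive Linear : Pat S → Prop where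
  | var (x : ℕ) : Linear (var x)
  | cons (c : S.C) (ps : Fin (S.ar c) → Pat S) :
      (∀ i, Linear (ps i)) →
      (∀ i j, i ≠ j → Disjoint (vars (ps i)) (vars (ps j))) →
      Linear (cons c ps)
  | plus {p q : Pat S} : Linear p → Linear q → Linear (plus p q)
  | minus {p q : Pat S} : Linear p → Linear q → Disjoint (vars p) (vars q) →
      Linear (minus p q)
  | bot : Linear bot
  | atp {q p : Pat S} : Linear q → Linear p → Disjoint (vars q) (vars p) →
      Linear (atp q p)

/-- Ground semantics of extended as-patterns. -/
def sem : Pat S → Set (Val S)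
  | var _ => Set.univ
  | cons c ps => {v | ∃ vs : Fin (S.ar c) → Val S, v = Val.mk c vs ∧ ∀ i, vs i ∈ sem (ps i)}
  | plus p q => sem p ∪ sem q
  | minus p q => sem p \ sem q
  | bot => ∅
  | atp q p => sem q ∩ sem p

/-- The extended instance relation: `Matches p v` means pattern `p` matches `v`. -/
def Matches : Pat S → Val S → Prop
  | var _, _ => True
  | cons c ps, v => ∃ vs : Fin (S.ar c) → Val S, v = Val.mk c vs ∧ ∀ i, Matches (ps i) (vs i)
  | plus p q, v => Matches p v ∨ Matches q v
  | minus p q, v => Matches p v ∧ ¬ Matches q v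
  | bot, _ => False
  | atp q p, v => Matches q v ∧ Matches p v

/-- Additive patterns: patterns containing no complement `∖`. -/
inductive Additive : Pat S → Prop where
  | var (x : ℕ) : Additive (var x)
  | cons (c : S.C) (ps : Fin (S.ar c) → Pat S) :
      (∀ i, Additive (ps i)) → Additive (cons c ps)
  | plus {p q : Pat S} : Additive p → Additive q → Additive (plus p q)
  | bot : Additive bot
  | atp {q p : Pat S} : Additive q → Additive p → Additive (atp q p)

/-- Patterns containing no `⊥`. A pattern is *pure additive* if it is
`Additive` and `BotFree`. -/
inductive BotFree : Pat S → Prop where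
  | var (x : ℕ) : BotFree (var x)
  | cons (c : S.C) (ps : Fin (S.ar c) → Pat S) :
      (∀ i, BotFree (ps i)) → BotFree (cons c ps)
  | plus {p q : Pat S} : BotFree p → BotFree q → BotFree (plus p q)
  | minus {p q : Pat S} : BotFree p → BotFree q → BotFree (minus p q)
  | atp {q p : Pat S} : BotFree q → BotFree p → BotFree (atp q p)

/-- The sum `p₁ + ⋯ + pₙ` of a list of patterns (`⊥` for the empty list). -/
def sumList : List (Pat S) → Pat S
  | [] => bot
  | [p] => p
  | p :: q :: r => plus p (sumList (q :: r))

variable [Fintype S.C]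

/-- The sum `Σ_{c ∈ C} c(z₁,…,z_m) ∖ g(t₁,…,tₙ)`, where the fresh variables
are given by `z i = fv i`. -/
noncomputable def sumVM (fv : ℕ → ℕ) (g : S.C) (ts : Fin (S.ar g) → Pat S) : Pat S :=
  sumList ((Finset.univ : Finset S.C).toList.map fun c =>
    minus (cons c fun i => var (fv i)) (cons g ts))

/-- One step of the rewriting system `R∖@` of Figure 3 (closed under contexts).
`fv` enumerates the fresh variables used by rule (M6'). -/
inductive Step (fv : ℕ → ℕ) : Pat S → Pat S → Prop where
  | addL {v : Pat S} : Additive v → Step fv (plus bot v) v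
  | addR {v : Pat S} : Additive v → Step fv (plus v bot) v
  | empty {c : S.C} {ps : Fin (S.ar c) → Pat S} (i : Fin (S.ar c)) :
      (∀ j, Additive (ps j)) → ps i = bot → Step fv (cons c ps) bot
  | emptyA {x : ℕ} : Step fv (atp (var x) bot) bot
  | dist {c : S.C} {ps : Fin (S.ar c) → Pat S} (i : Fin (S.ar c)) {u w : Pat S} :
      (∀ j, Additive (ps j)) → ps i = plus u w →
      Step fv (cons c ps)
        (plus (cons c (Function.update ps i u)) (cons c (Function.update ps i w)))
  | distAt {x : ℕ} {v1 v2 : Pat S} : Additive v1 → Additive v2 →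
      Step fv (atp (var x) (plus v1 v2)) (plus (atp (var x) v1) (atp (var x) v2))
  | minusMV {v : Pat S} {x : ℕ} : Additive v → Step fv (minus v (var x)) bot
  | minusMB {v : Pat S} : Additive v → Step fv (minus v bot) v
  | minusMP {w v1 v2 : Pat S} : Additive w → Additive v1 → Additive v2 →
      Step fv (minus w (plus v1 v2)) (minus (minus w v1) v2)
  | minusVM {x : ℕ} {g : S.C} {ts : Fin (S.ar g) → Pat S} :
      (∀ j, Additive (ts j)) → (∀ j, BotFree (ts j)) →
      Step fv (minus (var x) (cons g ts)) (atp (var x) (sumVM fv g ts))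
  | minusBM {g : S.C} {vs : Fin (S.ar g) → Pat S} :
      (∀ j, Additive (vs j)) → Step fv (minus bot (cons g vs)) bot
  | minusPM {v w : Pat S} {g : S.C} {vs : Fin (S.ar g) → Pat S} :
      Additive v → Additive w → (∀ j, Additive (vs j)) →
      Step fv (minus (plus v w) (cons g vs))
        (plus (minus v (cons g vs)) (minus w (cons g vs)))
  | minusFF {f : S.C} {vs ts : Fin (S.ar f) → Pat S} :
      (∀ j, Additive (vs j)) → (∀ j, Additive (ts j)) → (∀ j, BotFree (ts j)) →
      Step fv (minus (cons f vs) (cons f ts))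
        (sumList (List.ofFn fun i => cons f (Function.update vs i (minus (vs i) (ts i)))))
  | minusFG {f g : S.C} {vs : Fin (S.ar f) → Pat S} {ws : Fin (S.ar g) → Pat S} :
      f ≠ g → (∀ j, Additive (vs j)) → (∀ j, Additive (ws j)) →
      Step fv (minus (cons f vs) (cons g ws)) (cons f vs)
  | minusAM {x : ℕ} {v w : Pat S} : Additive v → Additive w →
      Step fv (minus (atp (var x) v) w) (atp (var x) (minus v w))
  | minusMA {x : ℕ} {v w : Pat S} : Additive v → Additive w →
      Step fv (minus v (atp (var x) w)) (minus v w)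
  | congCons {c : S.C} {ps : Fin (S.ar c) → Pat S} (i : Fin (S.ar c)) {p' : Pat S} :
      Step fv (ps i) p' → Step fv (cons c ps) (cons c (Function.update ps i p'))
  | congPlusL {p p' q : Pat S} : Step fv p p' → Step fv (plus p q) (plus p' q)
  | congPlusR {p q q' : Pat S} : Step fv q q' → Step fv (plus p q) (plus p q')
  | congMinusL {p p' q : Pat S} : Step fv p p' → Step fv (minus p q) (minus p' q)
  | congMinusR {p q q' : Pat S} : Step fv q q' → Step fv (minus p q) (minus p q')
  | congAliasL {q q' p : Pat S} : Step fv q q' → Step fv (atp q p) (atp q' p)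
  | congAliasR {q p p' : Pat S} : Step fv p p' → Step fv (atp q p) (atp q p')

/-- Patterns containing no sum `+`. -/
inductive PlusFree : Pat S → Prop where
  | var (x : ℕ) : PlusFree (var x)
  | cons (c : S.C) (ps : Fin (S.ar c) → Pat S) :
      (∀ i, PlusFree (ps i)) → PlusFree (cons c ps)
  | minus {p q : Pat S} : PlusFree p → PlusFree q → PlusFree (minus p q)
  | bot : PlusFree bot
  | atp {q p : Pat S} : PlusFree q → PlusFree p → PlusFree (atp q p)

/-- Terms in which every `+` symbol has only `+` symbols above it:
sums are pushed to the top. -/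
inductive TopPlus : Pat S → Prop where
  | leaf {p : Pat S} : PlusFree p → TopPlus p
  | plus {p q : Pat S} : TopPlus p → TopPlus q → TopPlus (plus p q)

/-- `q` is a normal form of `p` w.r.t. the relation `R`. -/
def NormalFormOf (R : Pat S → Pat S → Prop) (p q : Pat S) : Prop :=
  Relation.ReflTransGen R p q ∧ ¬ ∃ r, R q r

end Pat

namespace Pat

variable {S : Sig}

/-- The matchable variables of an extended as-pattern. -/
def mvar : Pat S → Set ℕ
  | var x => {x}
  | cons _ ps => ⋃ i, mvar (ps i)
  | plus p q => mvar p ∩ mvar q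
  | minus p _ => mvar p
  | bot => Set.univ
  | atp q p => mvar q ∪ mvar p

/-- The free variables of an extended as-pattern. -/
def fvar (p : Pat S) : Set ℕ := vars p \ mvar p

end Pat

namespace Pat

variable {S : Sig}

/-- Applying a substitution (a map from variables to terms) to a pattern. -/
def subst (σ : ℕ → Pat S) : Pat S → Pat S
  | var x => σ x
  | cons c ps => cons c fun i => subst σ (ps i)
  | plus p q => plus (subst σ p) (subst σ q)
  | minus p q => minus (subst σ p) (subst σ q)
  | bot => bot
  | atp q p => atp (subst σ q) (subst σ p)

/-- Plain constructor patterns (terms over the signature and variables). -/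
inductive PlainPat : Pat S → Prop where
  | var (x : ℕ) : PlainPat (var x)
  | cons (c : S.C) (ps : Fin (S.ar c) → Pat S) :
      (∀ i, PlainPat (ps i)) → PlainPat (cons c ps)

/-- The domain of a substitution. -/
def sdom (σ : ℕ → Pat S) : Set ℕ := {x | σ x ≠ var x}

end Pat

/-!
Each rule of `R∖@` is an identity between the ground semantics of its two sides that holds
whatever patterns are substituted for the variables, except where a variable `x` is dropped
because it stands for every value: `v ∖ x → ⊥` and `v ∖ x@w → v ∖ w`. If `σ` moves `x`,
then `x` is matchable in the redex without being free; by linearity it does not occur in the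
sibling `v`, and a variable can be matchable in a pattern it does not occur in only thanks to
a `⊥` there, so `⟦σ v⟧ = ∅` and both sides are empty. The same argument disposes of a step
inside a context whose free variables `σ` moves: the sibling of the hole, and with it the
whole term, is empty. The fresh variables of rule (M6') are left in place by `σ`, so the sum
it introduces still covers every value outside the subtracted pattern.
-/

namespace Pat

variable {S : Sig}

lemma mk_mem_sem_cons {c : S.C} {ps : Fin (S.ar c) → Pat S} {vs : Fin (S.ar c) → Val S} :
    Val.mk c vs ∈ sem (cons c ps) ↔ ∀ i, vs i ∈ sem (ps i) := by
  refine ⟨?_, fun h => ⟨vs, rfl, h⟩⟩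
  rintro ⟨ws, hws, h⟩
  cases hws
  exact h

lemma mk_notMem_sem_cons {c g : S.C} (hcg : c ≠ g) {ps : Fin (S.ar g) → Pat S}
    {vs : Fin (S.ar c) → Val S} : Val.mk c vs ∉ sem (cons g ps) := by
  rintro ⟨ws, hws, -⟩
  cases hws
  exact hcg rfl

lemma mk_mem_sem_cons_update {c : S.C} {ps : Fin (S.ar c) → Pat S} {i : Fin (S.ar c)}
    {q : Pat S} {vs : Fin (S.ar c) → Val S} :
    Val.mk c vs ∈ sem (cons c (Function.update ps i q)) ↔
      vs i ∈ sem q ∧ ∀ j ≠ i, vs j ∈ sem (ps j) := by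
  rw [mk_mem_sem_cons, Function.forall_update_iff ps fun j r => vs j ∈ sem r]

lemma sem_cons_eq_empty {c : S.C} {ps : Fin (S.ar c) → Pat S} (i : Fin (S.ar c))
    (h : sem (ps i) = ∅) : sem (cons c ps) = ∅ :=
  Set.eq_empty_of_forall_notMem fun _ ⟨vs, _, hvs⟩ => by simpa [h] using hvs i

lemma sem_cons_congr {c : S.C} {ps qs : Fin (S.ar c) → Pat S}
    (h : ∀ i, sem (ps i) = sem (qs i)) : sem (cons c ps) = sem (cons c qs) := by
  simp only [sem, h]

lemma sem_cons_update_of_sem_eq {c : S.C} {ps : Fin (S.ar c) → Pat S} {i : Fin (S.ar c)}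
    {q : Pat S} (h : sem q = sem (ps i)) :
    sem (cons c (Function.update ps i q)) = sem (cons c ps) := by
  refine sem_cons_congr fun j => ?_
  rcases eq_or_ne j i with rfl | hj
  · rw [Function.update_self, h]
  · rw [Function.update_of_ne hj]

lemma sem_cons_update_plus (c : S.C) (ps : Fin (S.ar c) → Pat S) (i : Fin (S.ar c))
    (u w : Pat S) :
    sem (cons c (Function.update ps i (plus u w))) =
      sem (cons c (Function.update ps i u)) ∪ sem (cons c (Function.update ps i w)) := by
  ext ⟨c', vs⟩
  rcases eq_or_ne c' c with rfl | hc
  · simp only [Set.mem_union, mk_mem_sem_cons_update]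
    simp only [sem, Set.mem_union]
    tauto
  · simp [mk_notMem_sem_cons hc]

lemma sem_cons_sdiff_sem_cons (f : S.C) (vs ts : Fin (S.ar f) → Pat S) :
    sem (cons f vs) \ sem (cons f ts) =
      ⋃ i, sem (cons f (Function.update vs i (minus (vs i) (ts i)))) := by
  ext ⟨c, us⟩
  rcases eq_or_ne c f with rfl | hc
  · simp only [Set.mem_sdiff, Set.mem_iUnion, mk_mem_sem_cons_update]
    simp only [mk_mem_sem_cons]
    simp only [sem, Set.mem_sdiff]
    constructor
    · rintro ⟨hvs, hts⟩
      obtain ⟨i, hi⟩ := not_forall.mp hts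
      exact ⟨i, ⟨hvs i, hi⟩, fun j _ => hvs j⟩
    · rintro ⟨i, ⟨hvi, hti⟩, hvs⟩
      refine ⟨fun j => ?_, fun hts => hti (hts i)⟩
      rcases eq_or_ne j i with rfl | hj
      exacts [hvi, hvs j hj]
  · simp [mk_notMem_sem_cons hc]

lemma sem_cons_sdiff_sem_cons_of_ne {f g : S.C} (hfg : f ≠ g) (vs : Fin (S.ar f) → Pat S)
    (ws : Fin (S.ar g) → Pat S) : sem (cons f vs) \ sem (cons g ws) = sem (cons f vs) := by
  refine sdiff_eq_self_iff_disjoint.mpr (Set.disjoint_right.mpr ?_)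
  rintro _ ⟨us, rfl, -⟩
  exact mk_notMem_sem_cons hfg

lemma sem_sumList : ∀ l : List (Pat S), sem (sumList l) = ⋃ p ∈ l, sem p
  | [] => by simp [sumList, sem]
  | [p] => by simp [sumList]
  | p :: q :: r => by
    rw [sumList, sem, sem_sumList (q :: r)]
    simp

lemma subst_sumList (σ : ℕ → Pat S) (l : List (Pat S)) :
    subst σ (sumList l) = sumList (l.map (subst σ)) := by
  induction l using sumList.induct with
  | case1 | case2 => rfl
  | case3 p q r ih => simp only [sumList, subst, ih, List.map_cons]

lemma subst_cons_update (σ : ℕ → Pat S) (c : S.C) (ps : Fin (S.ar c) → Pat S)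
    (i : Fin (S.ar c)) (q : Pat S) :
    subst σ (cons c (Function.update ps i q)) =
      cons c (Function.update (fun j => subst σ (ps j)) i (subst σ q)) :=
  congrArg (cons c) (Function.comp_update (subst σ) ps i q)

lemma sem_subst_eq_empty (σ : ℕ → Pat S) {x : ℕ} :
    ∀ {p : Pat S}, x ∈ mvar p → x ∉ vars p → sem (subst σ p) = ∅
  | var _, hm, hv => absurd hm hv
  | cons _ ps, hm, hv => by
    obtain ⟨i, hi⟩ := Set.mem_iUnion.mp hm
    exact sem_cons_eq_empty i (sem_subst_eq_empty σ hi fun h => hv (Set.mem_iUnion_of_mem i h))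
  | plus _ _, hm, hv => by
    simp only [subst, sem, sem_subst_eq_empty σ hm.1 fun h => hv (Or.inl h),
      sem_subst_eq_empty σ hm.2 fun h => hv (Or.inr h), Set.union_empty]
  | minus p _, hm, hv => by
    simp only [subst, sem, sem_subst_eq_empty σ (p := p) hm fun h => hv (Or.inl h),
      Set.empty_sdiff]
  | bot, _, _ => rfl
  | atp _ _, hm, hv => by
    rcases hm with hm | hm
    · simp only [subst, sem, sem_subst_eq_empty σ hm fun h => hv (Or.inl h), Set.empty_inter]
    · simp only [subst, sem, sem_subst_eq_empty σ hm fun h => hv (Or.inr h), Set.inter_empty]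

lemma fvar_subset_fvar_plus_left (p q : Pat S) : fvar p ⊆ fvar (plus p q) :=
  fun _ hx => ⟨Or.inl hx.1, fun h => hx.2 h.1⟩

lemma fvar_subset_fvar_plus_right (p q : Pat S) : fvar q ⊆ fvar (plus p q) :=
  fun _ hx => ⟨Or.inr hx.1, fun h => hx.2 h.2⟩

lemma fvar_subset_fvar_minus_left (p q : Pat S) : fvar p ⊆ fvar (minus p q) :=
  fun _ hx => ⟨Or.inl hx.1, hx.2⟩

lemma mem_mvar_of_mem_sdom {σ : ℕ → Pat S} {p : Pat S} (hdisj : Disjoint (sdom σ) (fvar p))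
    {x : ℕ} (hxσ : x ∈ sdom σ) (hx : x ∈ vars p) : x ∈ mvar p :=
  by_contra fun hm => Set.disjoint_left.mp hdisj hxσ ⟨hx, hm⟩

lemma sem_subst_minuend_eq_empty {σ : ℕ → Pat S} {p q : Pat S}
    (hpq : Disjoint (vars p) (vars q)) (hdisj : Disjoint (sdom σ) (fvar (minus p q))) {x : ℕ}
    (hxσ : x ∈ sdom σ) (hxq : x ∈ vars q) : sem (subst σ p) = ∅ :=
  sem_subst_eq_empty σ (mem_mvar_of_mem_sdom hdisj hxσ (Or.inr hxq)) (hpq.notMem_of_mem_right hxq)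

lemma eq_var_of_notMem_sdom {σ : ℕ → Pat S} {x : ℕ} (hx : x ∉ sdom σ) : σ x = var x :=
  not_not.mp hx

lemma sem_subst_minus_var {σ : ℕ → Pat S} {v : Pat S} {x : ℕ}
    (hvx : Disjoint (vars v) (vars (var x : Pat S)))
    (hdisj : Disjoint (sdom σ) (fvar (minus v (var x)))) :
    sem (subst σ (minus v (var x))) = ∅ := by
  by_cases hxσ : x ∈ sdom σ
  · simp only [subst, sem, sem_subst_minuend_eq_empty hvx hdisj hxσ rfl, Set.empty_sdiff]
  · simp only [subst, sem, eq_var_of_notMem_sdom hxσ, Set.sdiff_univ]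

lemma sem_subst_minus_atp_var {σ : ℕ → Pat S} {v w : Pat S} {x : ℕ}
    (hvxw : Disjoint (vars v) (vars (atp (var x) w)))
    (hdisj : Disjoint (sdom σ) (fvar (minus v (atp (var x) w)))) :
    sem (subst σ (minus v (atp (var x) w))) = sem (subst σ (minus v w)) := by
  by_cases hxσ : x ∈ sdom σ
  · simp only [subst, sem, sem_subst_minuend_eq_empty hvxw hdisj hxσ (Or.inl rfl),
      Set.empty_sdiff]
  · simp only [subst, sem, eq_var_of_notMem_sdom hxσ, Set.univ_inter]

lemma sem_subst_cons_update_congr {σ : ℕ → Pat S} {c : S.C} {ps : Fin (S.ar c) → Pat S}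
    {i : Fin (S.ar c)} {q : Pat S}
    (hps : ∀ j k, j ≠ k → Disjoint (vars (ps j)) (vars (ps k)))
    (hdisj : Disjoint (sdom σ) (fvar (cons c ps)))
    (h : Disjoint (sdom σ) (fvar (ps i)) → sem (subst σ (ps i)) = sem (subst σ q)) :
    sem (subst σ (cons c ps)) = sem (subst σ (cons c (Function.update ps i q))) := by
  rw [subst_cons_update]
  by_cases hσi : Disjoint (sdom σ) (fvar (ps i))
  · exact (sem_cons_update_of_sem_eq (h hσi).symm).symm
  obtain ⟨x, hxσ, hxi, hxmi⟩ := Set.not_disjoint_iff.mp hσi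
  obtain ⟨j, hxj⟩ :=
    Set.mem_iUnion.mp (mem_mvar_of_mem_sdom hdisj hxσ (Set.mem_iUnion_of_mem i hxi))
  have hji : j ≠ i := by
    rintro rfl
    exact hxmi hxj
  have hj : sem (subst σ (ps j)) = ∅ :=
    sem_subst_eq_empty σ hxj ((hps i j hji.symm).notMem_of_mem_left hxi)
  exact (sem_cons_eq_empty j hj).trans
    (sem_cons_eq_empty j (by rwa [Function.update_of_ne hji])).symm

lemma sem_subst_minus_congr_right {σ : ℕ → Pat S} {p q q' : Pat S}
    (hpq : Disjoint (vars p) (vars q)) (hdisj : Disjoint (sdom σ) (fvar (minus p q)))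
    (h : Disjoint (sdom σ) (fvar q) → sem (subst σ q) = sem (subst σ q')) :
    sem (subst σ (minus p q)) = sem (subst σ (minus p q')) := by
  by_cases hσq : Disjoint (sdom σ) (fvar q)
  · simp only [subst, sem, h hσq]
  · obtain ⟨x, hxσ, hxq, -⟩ := Set.not_disjoint_iff.mp hσq
    simp only [subst, sem, sem_subst_minuend_eq_empty hpq hdisj hxσ hxq, Set.empty_sdiff]

lemma sem_subst_atp_congr_left {σ : ℕ → Pat S} {q q' p : Pat S}
    (hqp : Disjoint (vars q) (vars p)) (hdisj : Disjoint (sdom σ) (fvar (atp q p)))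
    (h : Disjoint (sdom σ) (fvar q) → sem (subst σ q) = sem (subst σ q')) :
    sem (subst σ (atp q p)) = sem (subst σ (atp q' p)) := by
  by_cases hσq : Disjoint (sdom σ) (fvar q)
  · simp only [subst, sem, h hσq]
  · obtain ⟨x, hxσ, hxq, hxmq⟩ := Set.not_disjoint_iff.mp hσq
    have hxp := (mem_mvar_of_mem_sdom hdisj hxσ (Or.inl hxq)).resolve_left hxmq
    simp only [subst, sem, sem_subst_eq_empty σ hxp (hqp.notMem_of_mem_left hxq),
      Set.inter_empty]

lemma sem_subst_atp_congr_right {σ : ℕ → Pat S} {q p p' : Pat S}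
    (hqp : Disjoint (vars q) (vars p)) (hdisj : Disjoint (sdom σ) (fvar (atp q p)))
    (h : Disjoint (sdom σ) (fvar p) → sem (subst σ p) = sem (subst σ p')) :
    sem (subst σ (atp q p)) = sem (subst σ (atp q p')) := by
  by_cases hσp : Disjoint (sdom σ) (fvar p)
  · simp only [subst, sem, h hσp]
  · obtain ⟨x, hxσ, hxp, hxmp⟩ := Set.not_disjoint_iff.mp hσp
    have hxq := (mem_mvar_of_mem_sdom hdisj hxσ (Or.inr hxp)).resolve_right hxmp
    simp only [subst, sem, sem_subst_eq_empty σ hxq (hqp.notMem_of_mem_right hxp),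
      Set.empty_inter]

variable [Fintype S.C]

lemma sem_subst_sumVM {fv : ℕ → ℕ} {σ : ℕ → Pat S}
    (hfresh : ∀ n, σ (fv n) = var (fv n)) (g : S.C) (ts : Fin (S.ar g) → Pat S) :
    sem (subst σ (sumVM fv g ts)) = (sem (subst σ (cons g ts)))ᶜ := by
  have hsummand (c : S.C) :
      subst σ (minus (cons c fun i => var (fv i)) (cons g ts)) =
        minus (cons c fun i => var (fv i)) (subst σ (cons g ts)) := by
    simp only [subst, hfresh]
  ext ⟨c, vs⟩
  simp only [sumVM, subst_sumList, sem_sumList, List.map_map, List.mem_map, Function.comp_apply,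
    hsummand, Finset.mem_toList, Finset.mem_univ, true_and, Set.mem_iUnion, exists_prop,
    exists_exists_eq_and, sem]
  exact ⟨fun ⟨_, h⟩ => h.2, fun h => ⟨c, ⟨vs, rfl, fun _ => trivial⟩, h⟩⟩

theorem sem_subst_eq_of_step {fv : ℕ → ℕ} {σ : ℕ → Pat S}
    (hfresh : ∀ n, σ (fv n) = var (fv n)) {p p' : Pat S} (hstep : Step fv p p')
    (hlin : Linear p) (hdisj : Disjoint (sdom σ) (fvar p)) :
    sem (subst σ p) = sem (subst σ p') := by
  induction hstep with
  | addL _ | addR _ | emptyA | minusMB _ | minusBM _ => simp [subst, sem]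
  | empty i _ hi => exact sem_cons_eq_empty i (by simp [hi, subst, sem])
  | @dist c ps i u w _ hi =>
    change sem (subst σ (cons c ps)) = sem (subst σ (cons c (Function.update ps i u))) ∪
      sem (subst σ (cons c (Function.update ps i w)))
    conv_lhs => rw [← Function.update_eq_self i ps, hi]
    simp only [subst_cons_update]
    exact sem_cons_update_plus ..
  | distAt _ _ => simp only [subst, sem, Set.inter_union_distrib_left]
  | minusMP _ _ _ => simp only [subst, sem, Set.sdiff_sdiff]
  | minusVM _ _ => simp only [subst, sem, sem_subst_sumVM hfresh, Set.sdiff_eq]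
  | minusPM _ _ _ => simp only [subst, sem, Set.union_sdiff_distrib]
  | @minusFF f vs ts _ _ _ =>
    change sem (cons f fun j => subst σ (vs j)) \ sem (cons f fun j => subst σ (ts j)) = _
    rw [sem_cons_sdiff_sem_cons, subst_sumList, sem_sumList, List.map_ofFn]
    simp only [List.mem_ofFn, Set.iUnion_exists, Set.iUnion_iUnion_eq', Function.comp_apply,
      subst_cons_update]
    rfl
  | minusFG hfg _ _ => exact sem_cons_sdiff_sem_cons_of_ne hfg ..
  | minusAM _ _ => simp only [subst, sem, Set.inter_sdiff_assoc]
  | minusMV _ => cases hlin with | minus _ _ hvx => exact sem_subst_minus_var hvx hdisj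
  | minusMA _ _ => cases hlin with | minus _ _ hvxw => exact sem_subst_minus_atp_var hvxw hdisj
  | congCons i _ ih =>
    cases hlin with
    | cons _ _ hlins hps => exact sem_subst_cons_update_congr hps hdisj (ih (hlins i))
  | congPlusL _ ih =>
    cases hlin with
    | plus hp _ => simp only [subst, sem, ih hp (hdisj.mono_right (fvar_subset_fvar_plus_left ..))]
  | congPlusR _ ih =>
    cases hlin with
    | plus _ hq => simp only [subst, sem, ih hq (hdisj.mono_right (fvar_subset_fvar_plus_right ..))]
  | congMinusL _ ih =>
    cases hlin with
    | minus hp _ _ =>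
      simp only [subst, sem, ih hp (hdisj.mono_right (fvar_subset_fvar_minus_left ..))]
  | congMinusR _ ih =>
    cases hlin with | minus _ hq hpq => exact sem_subst_minus_congr_right hpq hdisj (ih hq)
  | congAliasL _ ih =>
    cases hlin with | atp hq _ hqp => exact sem_subst_atp_congr_left hqp hdisj (ih hq)
  | congAliasR _ ih =>
    cases hlin with | atp _ hp hqp => exact sem_subst_atp_congr_right hqp hdisj (ih hp)

end Pat

theorem stmt13_general (S : Sig) [Fintype S.C] (fv : ℕ → ℕ)
    (p p' : Pat S) (hlin : p.Linear) (hstep : Pat.Step fv p p')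
    (σ : ℕ → Pat S)
    (hdisj : Disjoint (Pat.sdom σ) p.fvar)
    (hfresh : ∀ n, σ (fv n) = Pat.var (fv n)) :
    (Pat.subst σ p).sem = (Pat.subst σ p').sem :=
  Pat.sem_subst_eq_of_step hfresh hstep hlin hdisj

/-- Semantics preservation under substitution application:
if `p` rewrites in one step to `p'` w.r.t. `R∖@` and `σ` is a substitution whose
(finite) domain is disjoint from the free variables of `p` (and which, by
freshness, leaves the fresh variables of the system untouched), then
`⟦σ(p)⟧ = ⟦σ(p')⟧`. -/
theorem stmt13 (S : Sig) [Fintype S.C] (fv : ℕ → ℕ) (hfv : Function.Injective fv)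
    (p p' : Pat S) (hlin : p.Linear) (hstep : Pat.Step fv p p')
    (σ : ℕ → Pat S)
    (hplain : ∀ x, Pat.PlainPat (σ x))
    (hfin : (Pat.sdom σ).Finite)
    (hdisj : Disjoint (Pat.sdom σ) p.fvar)
    (hfresh : ∀ n, σ (fv n) = Pat.var (fv n)) :
    (Pat.subst σ p).sem = (Pat.subst σ p').sem :=
  stmt13_general S fv p p' hlin hstep σ hdisj hfresh
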